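/- arXiv:2307.09236 — 4 statements merged into one kernel-verified Lean document; each statement's English description precedes it below -/
import Mathlib

section
/- Let U : ℝ^d × ℝ → ℝ be continuously differentiable, let φ : ℝ^d → ℝ be continuously differentiable, define u(x) = U(x, |φ(x)|), and let μ⁺, μ⁻ ∈ ℝ. Let x_Γ satisfy φ(x_Γ) = 0 and lie in the closure of {φ > 0} and of {φ < 0}. Then μ⁺∇u(x) → μ⁺(∇_x U(x_Γ, 0) + ∂_z U(x_Γ, 0)∇φ(x_Γ)) as x → x_Γ within {φ > 0}, μ⁻∇u(x) → μ⁻(∇_x U(x_Γ, 0) − ∂_z U(x_Γ, 0)∇φ(x_Γ)) as x → x_Γ within {φ < 0}, and hence the jump satisfies [μ∇u](x_Γ) = (μ⁺ − μ⁻)∇_x U(x_Γ, 0) + (μ⁺ + μ⁻)∂_z U(x_Γ, 0)∇φ(x_Γ), where μ takes the value μ⁺ on {φ > 0} and μ⁻ on {φ < 0}. -/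
/-!
On the open set `{φ > 0}` (resp. `{φ < 0}`) the function `u` coincides with the `C¹` function
`x ↦ U(x, φ x)` (resp. `x ↦ U(x, -φ x)`), so near `x_Γ` the gradient of `u` is the restriction of
a continuous gradient, whose value at `x_Γ` is given by the chain rule with `φ x_Γ = 0`.
Since `x_Γ` lies in both closures, the one-sided limits are unique, which gives the jump.
-/

open Topology Filter InnerProductSpace

variable {E : Type*} [NormedAddCommGroup E] [InnerProductSpace ℝ E] [CompleteSpace E]

theorem gradient_fun_neg (f : E → ℝ) (x : E) :
    gradient (fun y => -f y) x = -gradient f x := by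
  rw [gradient, gradient, fderiv_fun_neg, map_neg]

theorem ContDiff.continuous_gradient {f : E → ℝ} (hf : ContDiff ℝ 1 f) :
    Continuous (gradient f) :=
  (toDual ℝ E).symm.continuous.comp (hf.continuous_fderiv one_ne_zero)

theorem gradient_comp_prodMk {U : E × ℝ → ℝ} {ψ : E → ℝ} {x : E}
    (hU : DifferentiableAt ℝ U (x, ψ x)) (hψ : DifferentiableAt ℝ ψ x) :
    gradient (fun y => U (y, ψ y)) x
      = gradient (fun y => U (y, ψ x)) x + deriv (fun t => U (x, t)) (ψ x) • gradient ψ x := by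
  have hcomp : HasFDerivAt (fun y => U (y, ψ y))
      ((fderiv ℝ U (x, ψ x)).comp ((ContinuousLinearMap.id ℝ E).prod (fderiv ℝ ψ x))) x :=
    hU.hasFDerivAt.comp x ((hasFDerivAt_id x).prodMk hψ.hasFDerivAt)
  have hslice : HasFDerivAt (fun y => U (y, ψ x))
      ((fderiv ℝ U (x, ψ x)).comp ((ContinuousLinearMap.id ℝ E).prod 0)) x :=
    hU.hasFDerivAt.comp x ((hasFDerivAt_id x).prodMk (hasFDerivAt_const _ x))
  have hz : HasDerivAt (fun t => U (x, t)) (fderiv ℝ U (x, ψ x) (0, 1)) (ψ x) :=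
    hU.hasFDerivAt.comp_hasDerivAt (ψ x) ((hasDerivAt_const _ x).prodMk (hasDerivAt_id _))
  rw [gradient, gradient, gradient, hcomp.fderiv, hslice.fderiv, hz.deriv, ← map_smul, ← map_add]
  congr 1
  ext v
  have hsplit : (v, fderiv ℝ ψ x v) = (v, (0 : ℝ)) + fderiv ℝ ψ x v • ((0 : E), (1 : ℝ)) := by
    ext <;> simp
  simp only [ContinuousLinearMap.comp_apply, ContinuousLinearMap.prod_apply,
    ContinuousLinearMap.id_apply, add_apply, smul_apply, zero_apply]
  rw [hsplit, map_add, map_smul, smul_eq_mul, smul_eq_mul, mul_comm]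

theorem tendsto_gradient_nhdsWithin_of_eqOn {f g : E → ℝ} {s : Set E} (hs : IsOpen s)
    (hfg : Set.EqOn f g s) (hg : Continuous (gradient g)) (x : E) :
    Tendsto (gradient f) (𝓝[s] x) (𝓝 (gradient g x)) := by
  refine ((hg.tendsto x).mono_left nhdsWithin_le_nhds).congr' ?_
  filter_upwards [self_mem_nhdsWithin] with y hy
  exact Filter.EventuallyEq.gradient_eq (Filter.eventuallyEq_of_mem (hs.mem_nhds hy) hfg.symm)

theorem tendsto_gradient_comp_prodMk_nhdsWithin {U : E × ℝ → ℝ} {ψ χ : E → ℝ}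
    (hU : ContDiff ℝ 1 U) (hψ : ContDiff ℝ 1 ψ) {s : Set E} (hs : IsOpen s)
    (hχψ : Set.EqOn χ ψ s) (x : E) :
    Tendsto (gradient fun y => U (y, χ y)) (𝓝[s] x)
      (𝓝 (gradient (fun y => U (y, ψ x)) x + deriv (fun t => U (x, t)) (ψ x) • gradient ψ x)) := by
  rw [← gradient_comp_prodMk (hU.differentiable one_ne_zero _) (hψ.differentiable one_ne_zero _)]
  exact tendsto_gradient_nhdsWithin_of_eqOn (g := fun y => U (y, ψ y)) hs
    (fun y hy => congrArg (fun z => U (y, z)) (hχψ hy))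
    (hU.comp (contDiff_id.prodMk hψ)).continuous_gradient x

/-- One-sided limits and jump of `μ ∇u` across the interface for the cusp-capturing
representation `u(x) = U(x, |φ(x)|)`:
`[μ∇u](x_Γ) = (μ⁺-μ⁻) ∇_x U(x_Γ,0) + (μ⁺+μ⁻) ∂_z U(x_Γ,0) ∇φ(x_Γ)`. -/
theorem stmt_6 (d : ℕ) (U : EuclideanSpace ℝ (Fin d) × ℝ → ℝ)
    (φ : EuclideanSpace ℝ (Fin d) → ℝ)
    (hU : ContDiff ℝ 1 U) (hφ : ContDiff ℝ 1 φ) (μp μm : ℝ)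
    (xΓ : EuclideanSpace ℝ (Fin d)) (h0 : φ xΓ = 0)
    (hcp : xΓ ∈ closure {x | 0 < φ x}) (hcm : xΓ ∈ closure {x | φ x < 0}) :
    Tendsto (fun x => μp • gradient (fun y => U (y, |φ y|)) x) (𝓝[{x | 0 < φ x}] xΓ)
      (𝓝 (μp • (gradient (fun y => U (y, 0)) xΓ
            + (deriv (fun t => U (xΓ, t)) 0) • gradient φ xΓ)))
    ∧ Tendsto (fun x => μm • gradient (fun y => U (y, |φ y|)) x) (𝓝[{x | φ x < 0}] xΓ)
      (𝓝 (μm • (gradient (fun y => U (y, 0)) xΓ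
            - (deriv (fun t => U (xΓ, t)) 0) • gradient φ xΓ)))
    ∧ ∀ Lp Lm : EuclideanSpace ℝ (Fin d),
        Tendsto (fun x => μp • gradient (fun y => U (y, |φ y|)) x)
          (𝓝[{x | 0 < φ x}] xΓ) (𝓝 Lp) →
        Tendsto (fun x => μm • gradient (fun y => U (y, |φ y|)) x)
          (𝓝[{x | φ x < 0}] xΓ) (𝓝 Lm) →
        Lp - Lm = (μp - μm) • gradient (fun y => U (y, 0)) xΓ
          + ((μp + μm) * deriv (fun t => U (xΓ, t)) 0) • gradient φ xΓ := by
  have hp := tendsto_gradient_comp_prodMk_nhdsWithin hU hφ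
    (isOpen_lt continuous_const hφ.continuous) (fun x (hx : 0 < φ x) => abs_of_pos hx) xΓ
  have hm := tendsto_gradient_comp_prodMk_nhdsWithin hU hφ.neg
    (isOpen_lt hφ.continuous continuous_const) (fun x (hx : φ x < 0) => abs_of_neg hx) xΓ
  rw [h0] at hp
  rw [gradient_fun_neg, h0, neg_zero, smul_neg, ← sub_eq_add_neg] at hm
  refine ⟨hp.const_smul μp, hm.const_smul μm, fun Lp Lm hLp hLm => ?_⟩
  have := mem_closure_iff_nhdsWithin_neBot.mp hcp
  have := mem_closure_iff_nhdsWithin_neBot.mp hcm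
  rw [tendsto_nhds_unique hLp (hp.const_smul μp), tendsto_nhds_unique hLm (hm.const_smul μm)]
  module
end

section
/- Let U : ℝ^d × ℝ → ℝ be continuously differentiable, let φ : ℝ^d → ℝ be continuously differentiable, define u(x) = U(x, |φ(x)|), and let μ⁺, μ⁻ ∈ ℝ. Let x_Γ satisfy φ(x_Γ) = 0, lie in the closure of {φ > 0} and of {φ < 0}, and assume ∇φ(x_Γ) ≠ 0; set n = ∇φ(x_Γ)/‖∇φ(x_Γ)‖. Then the jump of the scaled normal derivative satisfies [μ ∂u/∂n](x_Γ) = (μ⁺ − μ⁻)(∇_x U(x_Γ, 0) · n) + (μ⁺ + μ⁻) ∂_z U(x_Γ, 0) ‖∇φ(x_Γ)‖, where ∂u/∂n = ∇u · n and μ equals μ⁺ on {φ > 0} and μ⁻ on {φ < 0}. -/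
/-!
On each side of the interface `u` coincides with a smooth function: `u = U(·, φ)` on `{φ > 0}`
and `u = U(·, -φ)` on `{φ < 0}`. The one-sided limits of `∂u/∂n` are therefore the normal
derivatives of these two extensions at `x_Γ`. By the chain rule each equals
`∇_x U(x_Γ, 0) · n ± ∂_z U(x_Γ, 0) (∇φ(x_Γ) · n)`, and `∇φ(x_Γ) · n = ‖∇φ(x_Γ)‖`; the tangential
parts survive with weight `μ⁺ - μ⁻`, the cusp parts with weight `μ⁺ + μ⁻`.
-/

open Topology Filter Set

variable {E : Type*} [NormedAddCommGroup E] [InnerProductSpace ℝ E]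

lemma fderiv_apply_normalized_gradient [CompleteSpace E] (f : E → ℝ) (x : E) :
    fderiv ℝ f x (‖gradient f x‖⁻¹ • gradient f x) = ‖gradient f x‖ := by
  rw [← inner_gradient_left, real_inner_smul_right, real_inner_self_eq_norm_sq]
  rcases eq_or_ne ‖gradient f x‖ 0 with h | h
  · simp [h]
  · field_simp

lemma fderiv_comp_graph_apply {U : E × ℝ → ℝ} {ψ : E → ℝ} {x : E} {c : ℝ}
    (hψx : ψ x = c) (hU : DifferentiableAt ℝ U (x, c)) (hψ : DifferentiableAt ℝ ψ x) (v : E) :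
    fderiv ℝ (fun y => U (y, ψ y)) x v
      = fderiv ℝ (fun y => U (y, c)) x v + fderiv ℝ ψ x v * deriv (fun t => U (x, t)) c := by
  subst hψx
  set L := fderiv ℝ U (x, ψ x)
  have hgraph : HasFDerivAt (fun y => U (y, ψ y))
      (L.comp ((ContinuousLinearMap.id ℝ E).prod (fderiv ℝ ψ x))) x :=
    hU.hasFDerivAt.comp x ((hasFDerivAt_id x).prodMk hψ.hasFDerivAt)
  have hslice : HasFDerivAt (fun y => U (y, ψ x)) (L.comp ((ContinuousLinearMap.id ℝ E).prod 0)) x :=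
    hU.hasFDerivAt.comp x ((hasFDerivAt_id x).prodMk (hasFDerivAt_const _ x))
  have hfibre : HasDerivAt (fun t => U (x, t)) (L (0, 1)) (ψ x) :=
    hU.hasFDerivAt.comp_hasDerivAt _ ((hasDerivAt_const _ x).prodMk (hasDerivAt_id _))
  have hsplit : ((v, fderiv ℝ ψ x v) : E × ℝ) = (v, 0) + fderiv ℝ ψ x v • ((0 : E), (1 : ℝ)) := by
    simp
  simp only [hgraph.fderiv, hslice.fderiv, hfibre.deriv, ContinuousLinearMap.comp_apply,
    ContinuousLinearMap.prod_apply, ContinuousLinearMap.id_apply, zero_apply]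
  rw [hsplit, map_add, map_smul, smul_eq_mul]

lemma tendsto_inner_gradient_nhdsWithin_of_eqOn [CompleteSpace E] {f g : E → ℝ} {s : Set E}
    (hs : IsOpen s) (hfg : EqOn f g s) (hg : ContDiff ℝ 1 g) (x₀ v : E) :
    Tendsto (fun x => (inner ℝ (gradient f x) v : ℝ)) (𝓝[s] x₀) (𝓝 (fderiv ℝ g x₀ v)) := by
  have hcont : Continuous fun x => fderiv ℝ g x v :=
    (hg.continuous_fderiv one_ne_zero).clm_apply continuous_const
  refine (hcont.tendsto x₀).mono_left nhdsWithin_le_nhds |>.congr' ?_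
  filter_upwards [self_mem_nhdsWithin] with x hx
  rw [inner_gradient_left, (hfg.eventuallyEq_of_mem (hs.mem_nhds hx)).fderiv_eq]

theorem stmt_7_general (d : ℕ) (U : EuclideanSpace ℝ (Fin d) × ℝ → ℝ)
    (φ : EuclideanSpace ℝ (Fin d) → ℝ)
    (hU : ContDiff ℝ 1 U) (hφ : ContDiff ℝ 1 φ) (μp μm : ℝ)
    (xΓ : EuclideanSpace ℝ (Fin d)) (h0 : φ xΓ = 0)
    (n : EuclideanSpace ℝ (Fin d)) (hn : n = ‖gradient φ xΓ‖⁻¹ • gradient φ xΓ) :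
    ∃ Lp Lm : ℝ,
      Tendsto (fun x => μp * (inner ℝ (gradient (fun y => U (y, |φ y|)) x) n : ℝ))
        (𝓝[{x | 0 < φ x}] xΓ) (𝓝 Lp)
      ∧ Tendsto (fun x => μm * (inner ℝ (gradient (fun y => U (y, |φ y|)) x) n : ℝ))
        (𝓝[{x | φ x < 0}] xΓ) (𝓝 Lm)
      ∧ Lp - Lm = (μp - μm) * (inner ℝ (gradient (fun y => U (y, 0)) xΓ) n : ℝ)
          + (μp + μm) * deriv (fun t => U (xΓ, t)) 0 * ‖gradient φ xΓ‖ := by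
  have hUd : DifferentiableAt ℝ U (xΓ, 0) := hU.differentiable one_ne_zero _
  have hφd : DifferentiableAt ℝ φ xΓ := hφ.differentiable one_ne_zero _
  have hφn : fderiv ℝ φ xΓ n = ‖gradient φ xΓ‖ := hn ▸ fderiv_apply_normalized_gradient φ xΓ
  have hplus := fderiv_comp_graph_apply h0 hUd hφd n
  have hminus := fderiv_comp_graph_apply (ψ := fun y => -φ y) (by simp [h0]) hUd hφd.neg n
  have hpos := tendsto_inner_gradient_nhdsWithin_of_eqOn
    (f := fun y => U (y, |φ y|)) (g := fun y => U (y, φ y))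
    (isOpen_lt continuous_const hφ.continuous) (fun x (hx : 0 < φ x) => by simp [abs_of_pos hx])
    (hU.comp (contDiff_id.prodMk hφ)) xΓ n
  have hneg := tendsto_inner_gradient_nhdsWithin_of_eqOn
    (f := fun y => U (y, |φ y|)) (g := fun y => U (y, -φ y))
    (isOpen_lt hφ.continuous continuous_const) (fun x (hx : φ x < 0) => by simp [abs_of_neg hx])
    (hU.comp (contDiff_id.prodMk hφ.neg)) xΓ n
  refine ⟨_, _, hpos.const_mul μp, hneg.const_mul μm, ?_⟩
  rw [hplus, hminus, fderiv_fun_neg, neg_apply, hφn, inner_gradient_left]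
  ring

/-- Jump of the scaled normal derivative `[μ ∂u/∂n]` across the interface for the
cusp-capturing representation `u(x) = U(x, |φ(x)|)`, with unit normal
`n = ∇φ(x_Γ)/‖∇φ(x_Γ)‖`:
`[μ ∂u/∂n](x_Γ) = (μ⁺-μ⁻)(∇_x U(x_Γ,0)·n) + (μ⁺+μ⁻) ∂_z U(x_Γ,0) ‖∇φ(x_Γ)‖`. -/
theorem stmt_7 (d : ℕ) (U : EuclideanSpace ℝ (Fin d) × ℝ → ℝ)
    (φ : EuclideanSpace ℝ (Fin d) → ℝ)
    (hU : ContDiff ℝ 1 U) (hφ : ContDiff ℝ 1 φ) (μp μm : ℝ)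
    (xΓ : EuclideanSpace ℝ (Fin d)) (h0 : φ xΓ = 0)
    (hcp : xΓ ∈ closure {x | 0 < φ x}) (hcm : xΓ ∈ closure {x | φ x < 0})
    (hgrad : gradient φ xΓ ≠ 0)
    (n : EuclideanSpace ℝ (Fin d)) (hn : n = ‖gradient φ xΓ‖⁻¹ • gradient φ xΓ) :
    ∃ Lp Lm : ℝ,
      Tendsto (fun x => μp * (inner ℝ (gradient (fun y => U (y, |φ y|)) x) n : ℝ))
        (𝓝[{x | 0 < φ x}] xΓ) (𝓝 Lp)
      ∧ Tendsto (fun x => μm * (inner ℝ (gradient (fun y => U (y, |φ y|)) x) n : ℝ))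
        (𝓝[{x | φ x < 0}] xΓ) (𝓝 Lm)
      ∧ Lp - Lm = (μp - μm) * (inner ℝ (gradient (fun y => U (y, 0)) xΓ) n : ℝ)
          + (μp + μm) * deriv (fun t => U (xΓ, t)) 0 * ‖gradient φ xΓ‖ :=
  stmt_7_general d U φ hU hφ μp μm xΓ h0 n hn
end

section
/- Let U : ℝ^d × ℝ → ℝ^d be continuously differentiable, let φ : ℝ^d → ℝ be continuously differentiable, define u(x) = U(x, |φ(x)|), and let μ⁺, μ⁻ ∈ ℝ. Let x_Γ satisfy φ(x_Γ) = 0, lie in the closure of {φ > 0} and of {φ < 0}, and assume ∇φ(x_Γ) ≠ 0; set n = ∇φ(x_Γ)/‖∇φ(x_Γ)‖. Then for each k = 1,…,d, the jump satisfies [μ ∂u/∂x_k](x_Γ) · n = (μ⁺ − μ⁻)(∂U/∂x_k (x_Γ, 0) · n) + (μ⁺ + μ⁻)(∂U/∂z (x_Γ, 0) · n) · ∂φ/∂x_k(x_Γ), where μ equals μ⁺ on {φ > 0} and μ⁻ on {φ < 0}. -/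
open Topology Filter

/-! On each side of the interface `|φ| = ±φ` on an open set, so there `u` agrees with the
`C¹` map `x ↦ U(x, ±φ x)`, whose `k`-th partial derivative `∂U/∂x_k ± (∂φ/∂x_k) ∂U/∂z` is
continuous up to `x_Γ`. The two one-sided limits therefore differ only in the sign of the
`∂U/∂z` term, which is why it appears with `μ⁺ + μ⁻` in the jump. -/

section

variable {𝕜 : Type*} [NontriviallyNormedField 𝕜]
  {E : Type*} [NormedAddCommGroup E] [NormedSpace 𝕜 E]
  {F : Type*} [NormedAddCommGroup F] [NormedSpace 𝕜 F]

theorem ContinuousLinearMap.apply_prod_eq_add_smul (A : E × 𝕜 →L[𝕜] F) (v : E) (t : 𝕜) :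
    A (v, t) = A (v, 0) + t • A (0, 1) := by
  rw [← map_smul, ← map_add, Prod.smul_mk, smul_zero, smul_eq_mul, mul_one, Prod.mk_add_mk,
    add_zero, zero_add]

theorem fderiv_comp_prodMk_apply {U : E × 𝕜 → F} {ψ : E → 𝕜} {x : E}
    (hU : DifferentiableAt 𝕜 U (x, ψ x)) (hψ : DifferentiableAt 𝕜 ψ x) (v : E) :
    fderiv 𝕜 (fun y => U (y, ψ y)) x v = fderiv 𝕜 U (x, ψ x) (v, fderiv 𝕜 ψ x v) := by
  have hpair : HasFDerivAt (fun y => (y, ψ y))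
      ((ContinuousLinearMap.id 𝕜 E).prod (fderiv 𝕜 ψ x)) x :=
    (hasFDerivAt_id x).prodMk hψ.hasFDerivAt
  exact congrFun (congrArg DFunLike.coe (hU.hasFDerivAt.comp x hpair).fderiv) v

theorem tendsto_fderiv_apply_nhdsWithin_of_eqOn {f g : E → F} {s : Set E} (hs : IsOpen s)
    (hfg : Set.EqOn f g s) (hg : ContDiff 𝕜 1 g) (x₀ : E) (v : E) :
    Tendsto (fun x => fderiv 𝕜 f x v) (𝓝[s] x₀) (𝓝 (fderiv 𝕜 g x₀ v)) := by
  have hcont : Continuous fun x => fderiv 𝕜 g x v :=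
    (hg.continuous_fderiv one_ne_zero).clm_apply continuous_const
  refine (hcont.tendsto x₀).mono_left nhdsWithin_le_nhds |>.congr' ?_
  filter_upwards [self_mem_nhdsWithin] with x hx
  rw [(hfg.eventuallyEq_of_mem (hs.mem_nhds hx)).fderiv_eq]

end

section

variable {E : Type*} [NormedAddCommGroup E] [NormedSpace ℝ E]
  {F : Type*} [NormedAddCommGroup F] [NormedSpace ℝ F]
  {U : E × ℝ → F} {φ : E → ℝ}

theorem tendsto_fderiv_comp_abs_of_pos (hU : ContDiff ℝ 1 U) (hφ : ContDiff ℝ 1 φ)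
    (x₀ v : E) :
    Tendsto (fun x => fderiv ℝ (fun y => U (y, |φ y|)) x v) (𝓝[{x | 0 < φ x}] x₀)
      (𝓝 (fderiv ℝ U (x₀, φ x₀) (v, fderiv ℝ φ x₀ v))) := by
  have hs : IsOpen {x | 0 < φ x} := isOpen_lt continuous_const hφ.continuous
  have hfg : Set.EqOn (fun y => U (y, |φ y|)) (fun y => U (y, φ y)) {x | 0 < φ x} :=
    fun y hy => by simp only [abs_of_pos (Set.mem_ofPred_eq ▸ hy)]
  rw [← fderiv_comp_prodMk_apply (hU.differentiable one_ne_zero _)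
    (hφ.differentiable one_ne_zero _)]
  exact tendsto_fderiv_apply_nhdsWithin_of_eqOn hs hfg (hU.comp (contDiff_id.prodMk hφ)) x₀ v

theorem tendsto_fderiv_comp_abs_of_neg (hU : ContDiff ℝ 1 U) (hφ : ContDiff ℝ 1 φ)
    (x₀ v : E) :
    Tendsto (fun x => fderiv ℝ (fun y => U (y, |φ y|)) x v) (𝓝[{x | φ x < 0}] x₀)
      (𝓝 (fderiv ℝ U (x₀, -φ x₀) (v, -fderiv ℝ φ x₀ v))) := by
  have hs : IsOpen {x | φ x < 0} := isOpen_lt hφ.continuous continuous_const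
  have hfg : Set.EqOn (fun y => U (y, |φ y|)) (fun y => U (y, -φ y)) {x | φ x < 0} :=
    fun y hy => by simp only [abs_of_neg (Set.mem_ofPred_eq ▸ hy)]
  have hnegφ : ContDiff ℝ 1 (fun y => -φ y) := hφ.neg
  have hval := fderiv_comp_prodMk_apply (hU.differentiable one_ne_zero (x₀, -φ x₀))
    (hnegφ.differentiable one_ne_zero x₀) v
  rw [fderiv_fun_neg, neg_apply] at hval
  rw [← hval]
  exact tendsto_fderiv_apply_nhdsWithin_of_eqOn hs hfg (hU.comp (contDiff_id.prodMk hnegφ)) x₀ v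

end

theorem stmt_8_general (d : ℕ)
    (U : EuclideanSpace ℝ (Fin d) × ℝ → EuclideanSpace ℝ (Fin d))
    (φ : EuclideanSpace ℝ (Fin d) → ℝ)
    (hU : ContDiff ℝ 1 U) (hφ : ContDiff ℝ 1 φ) (μp μm : ℝ)
    (xΓ : EuclideanSpace ℝ (Fin d)) (h0 : φ xΓ = 0)
    (n : EuclideanSpace ℝ (Fin d))
    (k : Fin d) :
    ∃ Lp Lm : EuclideanSpace ℝ (Fin d),
      Tendsto (fun x => μp • fderiv ℝ (fun y => U (y, |φ y|)) x (EuclideanSpace.single k 1))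
        (𝓝[{x | 0 < φ x}] xΓ) (𝓝 Lp)
      ∧ Tendsto (fun x => μm • fderiv ℝ (fun y => U (y, |φ y|)) x (EuclideanSpace.single k 1))
        (𝓝[{x | φ x < 0}] xΓ) (𝓝 Lm)
      ∧ (inner ℝ (Lp - Lm) n : ℝ)
          = (μp - μm) * (inner ℝ (fderiv ℝ U (xΓ, 0) (EuclideanSpace.single k 1, 0)) n : ℝ)
            + (μp + μm) * (inner ℝ (fderiv ℝ U (xΓ, 0) (0, 1)) n : ℝ)
              * fderiv ℝ φ xΓ (EuclideanSpace.single k 1) := by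
  set e : EuclideanSpace ℝ (Fin d) := EuclideanSpace.single k 1
  have hpos := tendsto_fderiv_comp_abs_of_pos hU hφ xΓ e
  have hneg := tendsto_fderiv_comp_abs_of_neg hU hφ xΓ e
  rw [h0] at hpos
  rw [h0, neg_zero] at hneg
  refine ⟨_, _, hpos.const_smul μp, hneg.const_smul μm, ?_⟩
  rw [ContinuousLinearMap.apply_prod_eq_add_smul _ e (fderiv ℝ φ xΓ e),
    ContinuousLinearMap.apply_prod_eq_add_smul _ e (-fderiv ℝ φ xΓ e)]
  simp only [smul_add, neg_smul, smul_neg, smul_smul, inner_neg_left, inner_sub_left,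
    inner_add_left, real_inner_smul_left]
  ring

/-- Jump of `μ ∂u/∂x_k` dotted with the unit normal `n = ∇φ(x_Γ)/‖∇φ(x_Γ)‖` for the
vector-valued cusp-capturing representation `u(x) = U(x, |φ(x)|)`:
`[μ ∂u/∂x_k](x_Γ)·n = (μ⁺-μ⁻)(∂U/∂x_k(x_Γ,0)·n) + (μ⁺+μ⁻)(∂U/∂z(x_Γ,0)·n) ∂φ/∂x_k(x_Γ)`. -/
theorem stmt_8 (d : ℕ)
    (U : EuclideanSpace ℝ (Fin d) × ℝ → EuclideanSpace ℝ (Fin d))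
    (φ : EuclideanSpace ℝ (Fin d) → ℝ)
    (hU : ContDiff ℝ 1 U) (hφ : ContDiff ℝ 1 φ) (μp μm : ℝ)
    (xΓ : EuclideanSpace ℝ (Fin d)) (h0 : φ xΓ = 0)
    (hcp : xΓ ∈ closure {x | 0 < φ x}) (hcm : xΓ ∈ closure {x | φ x < 0})
    (hgrad : gradient φ xΓ ≠ 0)
    (n : EuclideanSpace ℝ (Fin d)) (hn : n = ‖gradient φ xΓ‖⁻¹ • gradient φ xΓ)
    (k : Fin d) :
    ∃ Lp Lm : EuclideanSpace ℝ (Fin d),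
      Tendsto (fun x => μp • fderiv ℝ (fun y => U (y, |φ y|)) x (EuclideanSpace.single k 1))
        (𝓝[{x | 0 < φ x}] xΓ) (𝓝 Lp)
      ∧ Tendsto (fun x => μm • fderiv ℝ (fun y => U (y, |φ y|)) x (EuclideanSpace.single k 1))
        (𝓝[{x | φ x < 0}] xΓ) (𝓝 Lm)
      ∧ (inner ℝ (Lp - Lm) n : ℝ)
          = (μp - μm) * (inner ℝ (fderiv ℝ U (xΓ, 0) (EuclideanSpace.single k 1, 0)) n : ℝ)
            + (μp + μm) * (inner ℝ (fderiv ℝ U (xΓ, 0) (0, 1)) n : ℝ)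
              * fderiv ℝ φ xΓ (EuclideanSpace.single k 1) :=
  stmt_8_general d U φ hU hφ μp μm xΓ h0 n k
end

section
/- On ℝ³, let r² = x₁² + x₂² + x₃², let u(x) = (x₂x₃(r² − 1), x₃x₁(r² − 1), −2x₁x₂(r² − 1)), let p⁻ = 1 and p⁺ = 0, let μ⁻, μ⁺ ∈ ℝ with [μ] = μ⁺ − μ⁻, and let F(x) = (−x₁ − 2[μ]x₂x₃, −x₂ − 2[μ]x₃x₁, −x₃ + 4[μ]x₁x₂). Then for every point x on the unit sphere (r² = 1), with normal n = (x₁, x₂, x₃), the componentwise traction balance equation holds: for each k = 1, 2, 3, −(p⁺ − p⁻)n_k + [μ](∂u_k/∂n)(x) + [μ]((∂u/∂x_k)(x) · n) + F_k(x) = 0, where ∂u_k/∂n = ∇u_k · n and ∂u/∂x_k = (∂u₁/∂x_k, ∂u₂/∂x_k, ∂u₃/∂x_k), all derivatives of the globally smooth u being evaluated at x. -/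
/-- Exact velocity of Example 3:
`u = (x₂x₃(r²-1), x₃x₁(r²-1), -2x₁x₂(r²-1))` with `r² = x₁²+x₂²+x₃²`. -/
def u18 (x : Fin 3 → ℝ) : Fin 3 → ℝ :=
  ![x 1 * x 2 * ((x 0) ^ 2 + (x 1) ^ 2 + (x 2) ^ 2 - 1),
    x 2 * x 0 * ((x 0) ^ 2 + (x 1) ^ 2 + (x 2) ^ 2 - 1),
    -2 * x 0 * x 1 * ((x 0) ^ 2 + (x 1) ^ 2 + (x 2) ^ 2 - 1)]

/-- Interfacial force of Example 3, with `[μ] = μ⁺ - μ⁻`: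
`F = (-x₁ - 2[μ]x₂x₃, -x₂ - 2[μ]x₃x₁, -x₃ + 4[μ]x₁x₂)`. -/
noncomputable def F18 (μm μp : ℝ) (x : Fin 3 → ℝ) : Fin 3 → ℝ :=
  ![-(x 0) - 2 * (μp - μm) * x 1 * x 2,
    -(x 1) - 2 * (μp - μm) * x 2 * x 0,
    -(x 2) + 4 * (μp - μm) * x 0 * x 1]

/-!
The velocity factors as `u = (r² - 1) a` with the polynomial field `a = (x₂x₃, x₃x₁, -2x₁x₂)`.
Since `r² - 1` vanishes on the unit sphere, the product rule leaves `∇u_k = a_k ∇r² = 2 a_k x`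
there. Hence `∂u_k/∂n = 2 a_k |x|² = 2 a_k`, while `(∂u/∂x_k) · n = 2 x_k (a · x) = 0` because
`a · x = x₁x₂x₃ + x₁x₂x₃ - 2x₁x₂x₃ = 0`. The balance then reduces to `x_k + 2[μ] a_k + F_k = 0`,
which is how `F` was chosen.
-/

theorem fderiv_mul_of_right_eq_zero {𝕜 E : Type*} [NontriviallyNormedField 𝕜]
    [NormedAddCommGroup E] [NormedSpace 𝕜 E] {a φ : E → 𝕜} {x : E}
    (ha : DifferentiableAt 𝕜 a x) (hφ : DifferentiableAt 𝕜 φ x) (hφx : φ x = 0) :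
    fderiv 𝕜 (fun y => a y * φ y) x = a x • fderiv 𝕜 φ x := by
  ext v
  simp [fderiv_fun_mul ha hφ, hφx]

theorem fderiv_sum_sq_sub_one_apply {ι : Type*} [Fintype ι] (x v : ι → ℝ) :
    fderiv ℝ (fun y : ι → ℝ => ∑ i, y i ^ 2 - 1) x v = 2 * ∑ i, x i * v i := by
  rw [((HasFDerivAt.fun_sum fun i _ => (hasFDerivAt_apply i x).pow 2).sub_const 1).fderiv]
  simp [Finset.mul_sum, mul_assoc]

theorem fderiv_mul_sum_sq_sub_one_single {ι : Type*} [Fintype ι] [DecidableEq ι]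
    {a : (ι → ℝ) → ℝ} {x : ι → ℝ} (ha : DifferentiableAt ℝ a x) (hx : ∑ i, x i ^ 2 = 1) (j : ι) :
    fderiv ℝ (fun y => a y * (∑ i, y i ^ 2 - 1)) x (Pi.single j 1) = 2 * a x * x j := by
  rw [fderiv_mul_of_right_eq_zero ha (by fun_prop) (by rw [hx, sub_self]),
    smul_apply, fderiv_sum_sq_sub_one_apply]
  simp [Pi.single_apply]
  ring

def u18Coeff (x : Fin 3 → ℝ) : Fin 3 → ℝ :=
  ![x 1 * x 2, x 2 * x 0, -2 * x 0 * x 1]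

theorem u18_apply (y : Fin 3 → ℝ) (k : Fin 3) :
    u18 y k = u18Coeff y k * (∑ i, y i ^ 2 - 1) := by
  fin_cases k <;> simp [u18, u18Coeff, Fin.sum_univ_three]

theorem differentiable_u18Coeff (k : Fin 3) : Differentiable ℝ (fun y => u18Coeff y k) := by
  fin_cases k <;> simp [u18Coeff] <;> fun_prop

theorem sum_u18Coeff_mul_self (x : Fin 3 → ℝ) : ∑ j, u18Coeff x j * x j = 0 := by
  simp [u18Coeff, Fin.sum_univ_three]
  ring

theorem add_two_mul_u18Coeff_add_F18 (μm μp : ℝ) (x : Fin 3 → ℝ) (k : Fin 3) :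
    x k + 2 * (μp - μm) * u18Coeff x k + F18 μm μp x k = 0 := by
  fin_cases k <;> simp [u18Coeff, F18] <;> ring

/-- Componentwise traction balance equation of Example 3 on the unit sphere
(`p⁻ = 1`, `p⁺ = 0`, normal `n = (x₁,x₂,x₃)`): for each `k`,
`-(p⁺-p⁻)n_k + [μ](∂u_k/∂n) + [μ]((∂u/∂x_k)·n) + F_k = 0`, where the derivatives of the
globally smooth `u` are evaluated at `x`. -/
theorem stmt_18 (μm μp : ℝ) (x : Fin 3 → ℝ)
    (hx : (x 0) ^ 2 + (x 1) ^ 2 + (x 2) ^ 2 = 1) (k : Fin 3) :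
    -((0 : ℝ) - 1) * x k
      + (μp - μm) * (∑ j, fderiv ℝ (fun y => u18 y k) x (Pi.single j 1) * x j)
      + (μp - μm) * (∑ j, fderiv ℝ (fun y => u18 y j) x (Pi.single k 1) * x j)
      + F18 μm μp x k = 0 := by
  have hsphere : ∑ i, x i ^ 2 = 1 := by rwa [Fin.sum_univ_three]
  have hgrad (i j : Fin 3) :
      fderiv ℝ (fun y => u18 y i) x (Pi.single j 1) = 2 * u18Coeff x i * x j := by
    simp only [u18_apply]
    exact fderiv_mul_sum_sq_sub_one_single (differentiable_u18Coeff i x) hsphere j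
  have hnormal : ∑ j, 2 * u18Coeff x k * x j * x j = 2 * u18Coeff x k := by
    simp only [mul_assoc, ← Finset.mul_sum, ← sq, hsphere, mul_one]
  have htangential : ∑ j, 2 * u18Coeff x j * x k * x j = 2 * x k * ∑ j, u18Coeff x j * x j := by
    rw [Finset.mul_sum]
    exact Finset.sum_congr rfl fun j _ => by ring
  simp only [hgrad, hnormal, htangential, sum_u18Coeff_mul_self]
  linear_combination add_two_mul_u18Coeff_add_F18 μm μp x k
end
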